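/- Let M be an s×s symmetric real matrix such that all off-diagonal entries are nonnegative, there is a vector m with all entries strictly positive satisfying M·m = 0, and the graph on {1,…,s} with an edge {i,j} whenever M_{ij} > 0 (i ≠ j) is connected. Then M is negative semidefinite, and every vector x with xᵀ M x = 0 is a scalar multiple of m. -/

import Mathlib

/-!
Write `x = m * y` coordinatewise. Since `M m = 0` and `M` is symmetric, the quadratic form becomes
`xᵀ M x = -½ ∑_{i,j} M_{ij} m_i m_j (y_i - y_j)²`, a sum of nonnegative terms because the
off-diagonal entries of `M` are nonnegative. If it vanishes, then `y_i = y_j` whenever `M_{ij} > 0`,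
so `y` is constant on the connected graph, i.e. `x` is a multiple of `m`.
-/

open Matrix

theorem Pi.mul_div_cancel_of_forall_ne_zero {ι G : Type*} [CommGroupWithZero G] {m : ι → G}
    (hm : ∀ i, m i ≠ 0) (x : ι → G) : m * (x / m) = x :=
  funext fun i => mul_div_cancel₀ (x i) (hm i)

namespace Matrix

variable {ι R : Type*}

def edgeEnergy [Fintype ι] [CommRing R] (M : Matrix ι ι R) (m y : ι → R) : R :=
  ∑ i, ∑ j, M i j * m i * m j * (y i - y j) ^ 2

theorem IsSymm.two_mul_dotProduct_mulVec_eq_neg_edgeEnergy [Fintype ι] [CommRing R]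
    {M : Matrix ι ι R} (hM : M.IsSymm) {m : ι → R} (hker : M *ᵥ m = 0) (y : ι → R) :
    2 * ((m * y) ⬝ᵥ M *ᵥ (m * y)) = -M.edgeEnergy m y := by
  have hrow : ∀ i, ∑ j, M i j * m j = 0 := fun i => by
    simpa [mulVec, dotProduct] using congrFun hker i
  have hcol : ∀ j, ∑ i, M i j * m i = 0 := fun j => by
    simpa only [hM.apply] using hrow j
  have hleft : ∑ i, ∑ j, M i j * m i * m j * y i ^ 2 = 0 := by
    simp_rw [show ∀ i j, M i j * m i * m j * y i ^ 2 = m i * y i ^ 2 * (M i j * m j) from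
      fun _ _ => by ring, ← Finset.mul_sum, hrow, mul_zero, Finset.sum_const_zero]
  have hright : ∑ i, ∑ j, M i j * m i * m j * y j ^ 2 = 0 := by
    rw [Finset.sum_comm]
    simp_rw [show ∀ i j, M j i * m j * m i * y i ^ 2 = m i * y i ^ 2 * (M j i * m j) from
      fun _ _ => by ring, ← Finset.mul_sum, hcol, mul_zero, Finset.sum_const_zero]
  have hcross : (m * y) ⬝ᵥ M *ᵥ (m * y) = ∑ i, ∑ j, M i j * m i * m j * (y i * y j) := by
    simp only [dotProduct, mulVec, Pi.mul_apply, Finset.mul_sum]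
    exact Fintype.sum_congr _ _ fun i => Fintype.sum_congr _ _ fun j => by ring
  calc 2 * ((m * y) ⬝ᵥ M *ᵥ (m * y))
      = ∑ i, ∑ j, M i j * m i * m j * y i ^ 2 + ∑ i, ∑ j, M i j * m i * m j * y j ^ 2
          - M.edgeEnergy m y := by
        simp only [edgeEnergy, hcross, Finset.mul_sum, ← Finset.sum_add_distrib,
          ← Finset.sum_sub_distrib]
        exact Fintype.sum_congr _ _ fun i => Fintype.sum_congr _ _ fun j => by ring
    _ = -M.edgeEnergy m y := by rw [hleft, hright]; ring

theorem IsSymm.two_mul_dotProduct_mulVec_self_eq_neg_edgeEnergy [Fintype ι] [Field R]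
    {M : Matrix ι ι R} (hM : M.IsSymm) {m : ι → R} (hm : ∀ i, m i ≠ 0) (hker : M *ᵥ m = 0)
    (x : ι → R) : 2 * (x ⬝ᵥ M *ᵥ x) = -M.edgeEnergy m (x / m) := by
  simpa only [Pi.mul_div_cancel_of_forall_ne_zero hm] using
    hM.two_mul_dotProduct_mulVec_eq_neg_edgeEnergy hker (x / m)

section Ordered

variable [CommRing R] [LinearOrder R] [IsStrictOrderedRing R] {M : Matrix ι ι R} {m y : ι → R}

theorem edgeEnergy_term_nonneg (hoff : ∀ i j, i ≠ j → 0 ≤ M i j) (hm : ∀ i, 0 ≤ m i)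
    (i j : ι) : 0 ≤ M i j * m i * m j * (y i - y j) ^ 2 := by
  rcases eq_or_ne i j with rfl | hij
  · simp
  · exact mul_nonneg (mul_nonneg (mul_nonneg (hoff i j hij) (hm i)) (hm j)) (sq_nonneg _)

theorem edgeEnergy_nonneg [Fintype ι] (hoff : ∀ i j, i ≠ j → 0 ≤ M i j)
    (hm : ∀ i, 0 ≤ m i) : 0 ≤ M.edgeEnergy m y :=
  Finset.sum_nonneg fun i _ => Finset.sum_nonneg fun j _ => edgeEnergy_term_nonneg hoff hm i j

theorem apply_eq_of_edgeEnergy_eq_zero [Fintype ι] (hoff : ∀ i j, i ≠ j → 0 ≤ M i j)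
    (hm : ∀ i, 0 < m i) (h : M.edgeEnergy m y = 0) {i j : ι} (hij : 0 < M i j) : y i = y j := by
  have hnonneg := edgeEnergy_term_nonneg (y := y) hoff fun k => (hm k).le
  have hterm : M i j * m i * m j * (y i - y j) ^ 2 = 0 := by
    rw [edgeEnergy, Finset.sum_eq_zero_iff_of_nonneg fun i _ =>
      Finset.sum_nonneg fun j _ => hnonneg i j] at h
    exact (Finset.sum_eq_zero_iff_of_nonneg fun j _ => hnonneg i j).mp
      (h i (Finset.mem_univ i)) j (Finset.mem_univ j)
  have hweight : M i j * m i * m j ≠ 0 := (mul_pos (mul_pos hij (hm i)) (hm j)).ne'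
  simpa [hweight, sub_eq_zero] using hterm

theorem apply_eq_of_edgeEnergy_eq_zero_of_reflTransGen [Fintype ι]
    (hoff : ∀ i j, i ≠ j → 0 ≤ M i j) (hm : ∀ i, 0 < m i) (h : M.edgeEnergy m y = 0) {i j : ι}
    (hij : Relation.ReflTransGen (fun a b => a ≠ b ∧ 0 < M a b) i j) : y i = y j := by
  induction hij with
  | refl => rfl
  | tail _ hstep ih => exact ih.trans (apply_eq_of_edgeEnergy_eq_zero hoff hm h hstep.2)

end Ordered

section OrderedField

variable [Fintype ι] [Field R] [LinearOrder R] [IsStrictOrderedRing R] {M : Matrix ι ι R}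
  {m : ι → R}

theorem IsSymm.dotProduct_mulVec_self_nonpos (hM : M.IsSymm) (hoff : ∀ i j, i ≠ j → 0 ≤ M i j)
    (hm : ∀ i, 0 < m i) (hker : M *ᵥ m = 0) (x : ι → R) : x ⬝ᵥ M *ᵥ x ≤ 0 := by
  have h := hM.two_mul_dotProduct_mulVec_self_eq_neg_edgeEnergy (fun i => (hm i).ne') hker x
  linarith [edgeEnergy_nonneg (y := x / m) hoff fun i => (hm i).le]

theorem IsSymm.exists_eq_smul_of_dotProduct_mulVec_self_eq_zero (hM : M.IsSymm)
    (hoff : ∀ i j, i ≠ j → 0 ≤ M i j) (hm : ∀ i, 0 < m i) (hker : M *ᵥ m = 0)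
    (hconn : ∀ i j, Relation.ReflTransGen (fun a b => a ≠ b ∧ 0 < M a b) i j) {x : ι → R}
    (hx : x ⬝ᵥ M *ᵥ x = 0) : ∃ c : R, x = c • m := by
  have henergy : M.edgeEnergy m (x / m) = 0 := by
    have h := hM.two_mul_dotProduct_mulVec_self_eq_neg_edgeEnergy (fun i => (hm i).ne') hker x
    rw [hx] at h
    linear_combination h
  rcases isEmpty_or_nonempty ι with _ | ⟨⟨i₀⟩⟩
  · exact ⟨0, Subsingleton.elim _ _⟩
  refine ⟨x i₀ / m i₀, funext fun j => ?_⟩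
  have hconst : (x / m) j = (x / m) i₀ :=
    apply_eq_of_edgeEnergy_eq_zero_of_reflTransGen hoff hm henergy (hconn j i₀)
  rw [Pi.smul_apply, smul_eq_mul, ← Pi.div_apply, ← hconst, Pi.div_apply,
    div_mul_cancel₀ _ (hm j).ne']

end OrderedField

end Matrix

theorem stmt_5 (s : ℕ) (M : Matrix (Fin s) (Fin s) ℝ) (hsym : M.IsSymm)
    (hoff : ∀ i j : Fin s, i ≠ j → 0 ≤ M i j)
    (m : Fin s → ℝ) (hm : ∀ i, 0 < m i) (hker : M.mulVec m = 0)
    (hconn : ∀ i j : Fin s,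
      Relation.ReflTransGen (fun a b : Fin s => a ≠ b ∧ 0 < M a b) i j) :
    (∀ x : Fin s → ℝ, x ⬝ᵥ M.mulVec x ≤ 0) ∧
      (∀ x : Fin s → ℝ, x ⬝ᵥ M.mulVec x = 0 → ∃ c : ℝ, x = c • m) :=
  ⟨hsym.dotProduct_mulVec_self_nonpos hoff hm hker,
    fun _ => hsym.exists_eq_smul_of_dotProduct_mulVec_self_eq_zero hoff hm hker hconn⟩
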